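/- A finite game form F = ⟨St_A, St_B, O, ρ⟩ is determined if and only if for every partial valuation α : O∖E → [0,1] of its outcomes, the least fixed point v_α of f_α equals f_α(0). -/

import Mathlib

open scoped BigOperators Classical

noncomputable section

/-- A probability distribution on a finite type. -/
def FDist (X : Type) [Fintype X] : Type :=
  { p : X → ℝ // (∀ x, 0 ≤ p x) ∧ ∑ x, p x = 1 }

namespace CRG

variable {A B Q D : Type} [Fintype A] [Fintype B] [Fintype Q] [Fintype D]

/-- The support of a distribution. -/
def supp {X : Type} [Fintype X] (σ : FDist X) : Set X := { x | σ.1 x ≠ 0 }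

/-- The Dirac distribution. -/
def dirac {X : Type} [Fintype X] [DecidableEq X] (x : X) : FDist X :=
  ⟨fun y => if y = x then 1 else 0, by
    constructor
    · intro y
      dsimp only
      split <;> norm_num
    · simp⟩

/-- Outcome of a pair of mixed strategies in the game in normal form with payoff `u`. -/
def out (u : A → B → ℝ) (σA : FDist A) (σB : FDist B) : ℝ :=
  ∑ a, ∑ b, σA.1 a * σB.1 b * u a b

/-- Outcome of a mixed strategy of Player A against a pure action of Player B. -/
def outB (u : A → B → ℝ) (σA : FDist A) (b : B) : ℝ :=
  ∑ a, σA.1 a * u a b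

/-- The value of a Player A mixed strategy in a game in normal form. -/
def valStratGF (u : A → B → ℝ) (σA : FDist A) : ℝ :=
  ⨅ σB : FDist B, out u σA σB

/-- The (von Neumann) value of a finite game in normal form. -/
def valGF (u : A → B → ℝ) : ℝ :=
  ⨆ σA : FDist A, valStratGF u σA

/-- The optimal Player A mixed strategies in a game in normal form. -/
def OptA (u : A → B → ℝ) : Set (FDist A) := { σA | valStratGF u σA = valGF u }

/-- The optimal actions of Player B against the Player A mixed strategy `σA`. -/
def optActs (u : A → B → ℝ) (σA : FDist A) : Set B :=
  { b | outB u σA b = valStratGF u σA }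

/-- μ_v : the lift of a valuation of the states to the Nature states. -/
def lift (dist : D → FDist Q) (v : Q → ℝ) (d : D) : ℝ := ∑ q, (dist d).1 q * v q

/-- The payoff function of the local interaction `F_q` valued by `μ_m`. -/
def locPay (δ : Q → A → B → D) (dist : D → FDist Q) (m : Q → ℝ) (q : Q) : A → B → ℝ :=
  fun a b => lift dist m (δ q a b)

/-- One-step transition probability between states. -/
def step (δ : Q → A → B → D) (dist : D → FDist Q) (σA : FDist A) (σB : FDist B)
    (q q' : Q) : ℝ :=
  ∑ a, ∑ b, σA.1 a * σB.1 b * (dist (δ q a b)).1 q'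

/-- The operator Δ on valuations of the states. -/
def Δop (δ : Q → A → B → D) (dist : D → FDist Q) (T : Q) (v : Q → ℝ) : Q → ℝ :=
  fun q => if q = T then 1 else valGF (fun a b => lift dist v (δ q a b))

/-- The target `T` is an absorbing (self-looping) sink. -/
def Absorbing (δ : Q → A → B → D) (dist : D → FDist Q) (T : Q) : Prop :=
  ∀ a b, (dist (δ T a b)).1 = fun q => if q = T then 1 else 0

/-- `m` is the least fixed point of Δ on `[0,1]^Q`. -/
def IsLfpDelta (δ : Q → A → B → D) (dist : D → FDist Q) (T : Q) (m : Q → ℝ) : Prop :=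
  (∀ q, m q ∈ Set.Icc (0:ℝ) 1) ∧ Δop δ dist T m = m ∧
    ∀ v : Q → ℝ, (∀ q, v q ∈ Set.Icc (0:ℝ) 1) → Δop δ dist T v = v → ∀ q, m q ≤ v q

/-- A strategy: a history of past states together with the current state gives a
mixed action.  (This encodes maps `Q⁺ → 𝒟(X)`.) -/
def Strat (Q X : Type) [Fintype X] : Type := List Q → Q → FDist X

/-- Residual strategy after the history `π` has been played. -/
def residual {X : Type} [Fintype X] (s : Strat Q X) (π : List Q) : Strat Q X :=
  fun h q => s (π ++ h) q

/-- The (positional) strategy associated with a per-state choice of mixed actions. -/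
def ofPos {X : Type} [Fintype X] (s : Q → FDist X) : Strat Q X := fun _ q => s q

/-- Probability of reaching the set `S` within `n` steps from current state `q`,
history `h` having been played. -/
def reachSetNAux (δ : Q → A → B → D) (dist : D → FDist Q) (S : Set Q) :
    ℕ → Strat Q A → Strat Q B → List Q → Q → ℝ
  | 0, _, _, _, q => if q ∈ S then 1 else 0
  | n + 1, sA, sB, h, q =>
      if q ∈ S then 1
      else ∑ q', step δ dist (sA h q) (sB h q) q q' *
        reachSetNAux δ dist S n sA sB (h ++ [q]) q'

/-- Probability of reaching the set `S` within `n` steps from state `q`. -/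
def reachSetN (δ : Q → A → B → D) (dist : D → FDist Q) (S : Set Q) (n : ℕ)
    (sA : Strat Q A) (sB : Strat Q B) (q : Q) : ℝ :=
  reachSetNAux δ dist S n sA sB [] q

/-- Probability of reaching the target `T` within `n` steps from state `q`. -/
def reachN (δ : Q → A → B → D) (dist : D → FDist Q) (T : Q) (n : ℕ)
    (sA : Strat Q A) (sB : Strat Q B) (q : Q) : ℝ :=
  reachSetN δ dist {T} n sA sB q

/-- Probability of eventually reaching the target `T` from state `q`. -/
def reach (δ : Q → A → B → D) (dist : D → FDist Q) (T : Q)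
    (sA : Strat Q A) (sB : Strat Q B) (q : Q) : ℝ :=
  ⨆ n : ℕ, reachN δ dist T n sA sB q

/-- The value of a Player A strategy from state `q`. -/
def valA (δ : Q → A → B → D) (dist : D → FDist Q) (T : Q) (sA : Strat Q A) (q : Q) : ℝ :=
  ⨅ sB : Strat Q B, reach δ dist T sA sB q

/-- The value of the game from state `q`. -/
def value (δ : Q → A → B → D) (dist : D → FDist Q) (T : Q) (q : Q) : ℝ :=
  ⨆ sA : Strat Q A, valA δ dist T sA q

/-- A state is maximizable when Player A has an optimal strategy from it. -/
def Maximizable (δ : Q → A → B → D) (dist : D → FDist Q) (T q : Q) : Prop :=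
  ∃ sA : Strat Q A, valA δ dist T sA q = value δ dist T q

/-- A positional Player A strategy locally dominates the valuation `v`. -/
def LocallyDominates (δ : Q → A → B → D) (dist : D → FDist Q)
    (sA : Q → FDist A) (v : Q → ℝ) : Prop :=
  ∀ q, v q ≤ valStratGF (fun a b => lift dist v (δ q a b)) (sA q)

/-- Transition function ι of the MDP induced by a positional Player A strategy. -/
def stepB [DecidableEq B] (δ : Q → A → B → D) (dist : D → FDist Q)
    (sA : Q → FDist A) (q : Q) (b : B) (q' : Q) : ℝ :=
  step δ dist (sA q) (dirac b) q q'

/-- An end component of the MDP induced by the positional Player A strategy `sA`. -/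
structure EndComp [DecidableEq B] (δ : Q → A → B → D) (dist : D → FDist Q)
    (sA : Q → FDist A) where
  states : Set Q
  acts : Q → Set B
  acts_nonempty : ∀ q ∈ states, (acts q).Nonempty
  closed : ∀ q ∈ states, ∀ b ∈ acts q, ∀ q', stepB δ dist sA q b q' ≠ 0 → q' ∈ states
  connected : ∀ q ∈ states, ∀ q' ∈ states,
    Relation.ReflTransGen
      (fun x y => x ∈ states ∧ ∃ b ∈ acts x, stepB δ dist sA x b y ≠ 0) q q'

/-- `S_D` : the Nature states having a non-zero probability to reach `S`. -/
def natS (dist : D → FDist Q) (S : Set Q) : Set D :=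
  { d | ∃ q ∈ S, (dist d).1 q ≠ 0 }

/-- Progressive optimal local strategies at `q` w.r.t. the set `Gd`. -/
def Prog (δ : Q → A → B → D) (dist : D → FDist Q) (m : Q → ℝ) (q : Q)
    (Gd : Set Q) : Set (FDist A) :=
  { σA | σA ∈ OptA (locPay δ dist m q) ∧
      ∀ b ∈ optActs (locPay δ dist m q) σA, ∃ a ∈ supp σA, δ q a b ∈ natS dist Gd }

/-- Risky optimal local strategies at `q` w.r.t. the set `Bd`. -/
def Risk (δ : Q → A → B → D) (dist : D → FDist Q) (m : Q → ℝ) (q : Q)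
    (Bd : Set Q) : Set (FDist A) :=
  { σA | σA ∈ OptA (locPay δ dist m q) ∧
      ∃ b ∈ optActs (locPay δ dist m q) σA, ∃ a ∈ supp σA, δ q a b ∈ natS dist Bd }

/-- Efficient local strategies: progressive and not risky. -/
def Eff (δ : Q → A → B → D) (dist : D → FDist Q) (m : Q → ℝ) (q : Q)
    (Gd Bd : Set Q) : Set (FDist A) :=
  Prog δ dist m q Gd \ Risk δ dist m q Bd

/-- The increasing sequence of sets of secure states w.r.t. `Bd`. -/
def SecN (δ : Q → A → B → D) (dist : D → FDist Q) (m : Q → ℝ) (T : Q) (Bd : Set Q) :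
    ℕ → Set Q
  | 0 => {T}
  | n + 1 => SecN δ dist m T Bd n ∪
      { q | q ∉ Bd ∧ (Eff δ dist m q (SecN δ dist m T Bd n) Bd).Nonempty }

/-- The set of secure states w.r.t. `Bd`. -/
def Sec (δ : Q → A → B → D) (dist : D → FDist Q) (m : Q → ℝ) (T : Q) (Bd : Set Q) :
    Set Q :=
  (⋃ n : ℕ, SecN δ dist m T Bd n) ∪ { q | m q = 0 }

/-- The sequence of sets of bad states. -/
def BadN (δ : Q → A → B → D) (dist : D → FDist Q) (m : Q → ℝ) (T : Q) : ℕ → Set Q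
  | 0 => ∅
  | n + 1 => (Sec δ dist m T (BadN δ dist m T n))ᶜ

/-- The set of bad states. -/
def Bad (δ : Q → A → B → D) (dist : D → FDist Q) (m : Q → ℝ) (T : Q) : Set Q :=
  BadN δ dist m T (Fintype.card Q)

/-- `α[y]` : the total valuation extending the partial valuation `α : O∖E → [0,1]`
with the value `y` on `E`. -/
def extendVal {O : Type} (E : Set O) (α : O → ℝ) (y : ℝ) : O → ℝ :=
  fun o => if o ∈ E then y else α o

/-- The map `f_α : y ↦ val_{⟨F, α[y]⟩}`. -/
def fval {O : Type} (ρ : A → B → O) (E : Set O) (α : O → ℝ) (y : ℝ) : ℝ :=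
  valGF (fun a b => extendVal E α y (ρ a b))

/-- `v` is the least fixed point of `f_α` on `[0,1]`. -/
def IsLfpVal {O : Type} (ρ : A → B → O) (E : Set O) (α : O → ℝ) (v : ℝ) : Prop :=
  v ∈ Set.Icc (0:ℝ) 1 ∧ fval ρ E α v = v ∧
    ∀ y ∈ Set.Icc (0:ℝ) 1, fval ρ E α y = y → v ≤ y

/-- The game form `ρ` is reach-maximizable w.r.t. the partial valuation `α : O∖E → [0,1]`. -/
def RMwrt {O : Type} (ρ : A → B → O) (E : Set O) (α : O → ℝ) : Prop :=
  ∀ v : ℝ, IsLfpVal ρ E α v →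
    v = 0 ∨
      ∃ σA ∈ OptA (fun a b => extendVal E α v (ρ a b)),
        ∀ b ∈ optActs (fun a b => extendVal E α v (ρ a b)) σA,
          ∃ a ∈ supp σA, ρ a b ∉ E

/-- A reach-maximizable game form: RM w.r.t. every partial valuation of its outcomes. -/
def RMform {O : Type} (ρ : A → B → O) : Prop :=
  ∀ (E : Set O) (α : O → ℝ), (∀ o ∉ E, α o ∈ Set.Icc (0:ℝ) 1) → RMwrt ρ E α

/-- A determined game form. -/
def Determined {O : Type} (ρ : A → B → O) : Prop :=
  ∀ E : Set O, (∃ a, ∀ b, ρ a b ∈ E) ∨ (∃ b, ∀ a, ρ a b ∉ E)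

/-- Transition function of the three-state reachability game `C_{(F,α)}`:
state `0` is `q₀`, state `1` is the target `⊤`, state `2` is the bin `⊥`. -/
def triδ {O : Type} (ρ : A → B → O) (E : Set O) :
    Fin 3 → A → B → (Fin 3 ⊕ {o : O // o ∉ E}) :=
  fun s a b =>
    if s = 0 then
      if h : ρ a b ∈ E then Sum.inl 0 else Sum.inr ⟨ρ a b, h⟩
    else Sum.inl s

/-- Nature distributions of the three-state reachability game `C_{(F,α)}`. -/
def triDist {O : Type} (E : Set O) (α : O → ℝ)
    (hα : ∀ o ∉ E, α o ∈ Set.Icc (0:ℝ) 1) :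
    (Fin 3 ⊕ {o : O // o ∉ E}) → FDist (Fin 3) := fun d =>
  match d with
  | Sum.inl t => dirac t
  | Sum.inr x =>
      ⟨![0, α x.1, 1 - α x.1], by
        obtain ⟨h0, h1⟩ := hα x.1 x.2
        constructor
        · intro s
          fin_cases s <;> simp <;> linarith
        · simp [Fin.sum_univ_three]⟩

/-- An abstract (finite) game form with actions `A` and `B`. -/
structure GameForm (A B : Type) where
  O : Type
  fin : Fintype O
  ρ : A → B → O

/-- All local interactions of the arena `δ` belong to the set `𝒢` of game forms
(up to a renaming of the outcomes into Nature states). -/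
def UsesForms {Q D : Type} (𝒢 : Set (GameForm A B)) (δ : Q → A → B → D) : Prop :=
  ∀ q, ∃ F ∈ 𝒢, ∃ g : F.O → D, δ q = fun a b => g (F.ρ a b)

/-- The sequence of iterates of Δ starting from the valuation `1_{⊤}`. -/
def vseq (δ : Q → A → B → D) (dist : D → FDist Q) (T : Q) : ℕ → Q → ℝ
  | 0 => fun q => if q = T then 1 else 0
  | n + 1 => Δop δ dist T (vseq δ dist T n)

/-- Relevant paths w.r.t. the strategy `sA` from the state `q₀`: the pair `(h, q)`
encodes the path `h · q` (history `h`, current state `q`). -/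
inductive Relevant [DecidableEq B] (δ : Q → A → B → D) (dist : D → FDist Q)
    (m : Q → ℝ) (sA : Strat Q A) (q₀ : Q) : List Q → Q → Prop
  | base : Relevant δ dist m sA q₀ [] q₀
  | step {h : List Q} {q q' : Q} :
      Relevant δ dist m sA q₀ h q →
      (∃ b ∈ optActs (locPay δ dist m q) (sA h q),
        0 < CRG.step δ dist (sA h q) (dirac b) q q') →
      Relevant δ dist m sA q₀ (h ++ [q]) q'

end CRG

/-
If the form is determined, Player B answers the threshold `c = f_α(0)` with a pure column whose
outcomes are all valued at most `c` under `α[0]`: otherwise determinacy would give Player A a row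
valued above `c`. Under `α[c]` that column is still bounded by `c`, so `f_α(0)` is already a fixed
point, and by monotonicity the least one. Conversely, if some `E` is forced by neither player,
value `1` on `E` and `y` elsewhere gives `f(y) > y` for every `y < 1` (Player A mixes uniformly),
so the least fixed point is `1`, while `f(0) < 1` (Player B mixes uniformly).
-/

namespace FDist

variable {X : Type} [Fintype X]

def uniform (X : Type) [Fintype X] [Nonempty X] : FDist X :=
  ⟨fun _ => (Fintype.card X : ℝ)⁻¹, fun _ => by positivity, by
    simp [Finset.card_univ, Fintype.card_ne_zero]⟩

instance [Nonempty X] : Nonempty (FDist X) := ⟨uniform X⟩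

lemma uniform_pos [Nonempty X] (x : X) : 0 < (uniform X).1 x :=
  inv_pos.2 (Nat.cast_pos.2 Fintype.card_pos)

lemma le_sum_mul (σ : FDist X) {g : X → ℝ} {c : ℝ} (h : ∀ x, c ≤ g x) :
    c ≤ ∑ x, σ.1 x * g x :=
  calc c = ∑ x, σ.1 x * c := by rw [← Finset.sum_mul, σ.2.2, one_mul]
    _ ≤ ∑ x, σ.1 x * g x :=
      Finset.sum_le_sum fun x _ => mul_le_mul_of_nonneg_left (h x) (σ.2.1 x)

lemma sum_mul_le (σ : FDist X) {g : X → ℝ} {c : ℝ} (h : ∀ x, g x ≤ c) :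
    ∑ x, σ.1 x * g x ≤ c := by
  simpa using σ.le_sum_mul (g := fun x => -g x) (c := -c) fun x => neg_le_neg (h x)

lemma lt_sum_mul (σ : FDist X) (hσ : ∀ x, 0 < σ.1 x) {g : X → ℝ} {c : ℝ}
    (hle : ∀ x, c ≤ g x) (hlt : ∃ x, c < g x) : c < ∑ x, σ.1 x * g x :=
  calc c = ∑ x, σ.1 x * c := by rw [← Finset.sum_mul, σ.2.2, one_mul]
    _ < ∑ x, σ.1 x * g x := by
      obtain ⟨x, hx⟩ := hlt
      exact Finset.sum_lt_sum (fun x _ => mul_le_mul_of_nonneg_left (hle x) (σ.2.1 x))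
        ⟨x, Finset.mem_univ x, mul_lt_mul_of_pos_left hx (hσ x)⟩

lemma sum_mul_lt (σ : FDist X) (hσ : ∀ x, 0 < σ.1 x) {g : X → ℝ} {c : ℝ}
    (hle : ∀ x, g x ≤ c) (hlt : ∃ x, g x < c) : ∑ x, σ.1 x * g x < c := by
  obtain ⟨x, hx⟩ := hlt
  simpa using σ.lt_sum_mul hσ (g := fun x => -g x) (c := -c) (fun x => neg_le_neg (hle x))
    ⟨x, neg_lt_neg hx⟩

end FDist

namespace CRG

lemma sum_dirac_mul {X : Type} [Fintype X] [DecidableEq X] (x : X) (g : X → ℝ) :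
    ∑ y, (dirac x).1 y * g y = g x := by
  simp [dirac]

section Value

variable {A B : Type} [Fintype A] [Fintype B] (u : A → B → ℝ)

lemma out_eq_sum_outB (σA : FDist A) (σB : FDist B) :
    out u σA σB = ∑ b, σB.1 b * outB u σA b := by
  simp only [out, outB, Finset.mul_sum]
  rw [Finset.sum_comm]
  exact Finset.sum_congr rfl fun b _ => Finset.sum_congr rfl fun a _ => by ring

lemma out_eq_sum_row (σA : FDist A) (σB : FDist B) :
    out u σA σB = ∑ a, σA.1 a * ∑ b, σB.1 b * u a b := by
  simp only [out, Finset.mul_sum]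
  exact Finset.sum_congr rfl fun a _ => Finset.sum_congr rfl fun b _ => by ring

variable {u}

lemma le_out {c : ℝ} (h : ∀ a b, c ≤ u a b) (σA : FDist A) (σB : FDist B) :
    c ≤ out u σA σB := by
  rw [out_eq_sum_outB]
  exact σB.le_sum_mul fun b => σA.le_sum_mul fun a => h a b

lemma out_le {c : ℝ} (h : ∀ a b, u a b ≤ c) (σA : FDist A) (σB : FDist B) :
    out u σA σB ≤ c := by
  rw [out_eq_sum_outB]
  exact σB.sum_mul_le fun b => σA.sum_mul_le fun a => h a b

lemma out_mono {u' : A → B → ℝ} (h : ∀ a b, u a b ≤ u' a b) (σA : FDist A) (σB : FDist B) :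
    out u σA σB ≤ out u' σA σB :=
  Finset.sum_le_sum fun a _ => Finset.sum_le_sum fun b _ =>
    mul_le_mul_of_nonneg_left (h a b) (mul_nonneg (σA.2.1 a) (σB.2.1 b))

variable (u)

lemma exists_forall_le : ∃ c, ∀ a b, c ≤ u a b := by
  obtain ⟨c, hc⟩ := (Set.finite_range (Function.uncurry u)).bddBelow
  exact ⟨c, fun a b => hc ⟨(a, b), rfl⟩⟩

lemma exists_forall_ge : ∃ c, ∀ a b, u a b ≤ c := by
  obtain ⟨c, hc⟩ := (Set.finite_range (Function.uncurry u)).bddAbove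
  exact ⟨c, fun a b => hc ⟨(a, b), rfl⟩⟩

lemma valStratGF_le_out (σA : FDist A) (σB : FDist B) : valStratGF u σA ≤ out u σA σB := by
  obtain ⟨c, hc⟩ := exists_forall_le u
  exact ciInf_le ⟨c, Set.forall_mem_range.2 (le_out hc σA)⟩ σB

lemma bddAbove_range_valStratGF [Nonempty B] : BddAbove (Set.range (valStratGF u)) := by
  obtain ⟨c, hc⟩ := exists_forall_ge u
  exact ⟨c, Set.forall_mem_range.2 fun σA =>
    (valStratGF_le_out u σA (FDist.uniform B)).trans (out_le hc _ _)⟩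

variable {u}

lemma le_valGF_of_forall_le_outB [Nonempty B] (σA : FDist A) {c : ℝ}
    (h : ∀ b, c ≤ outB u σA b) : c ≤ valGF u :=
  (le_ciInf fun σB => by rw [out_eq_sum_outB]; exact σB.le_sum_mul h).trans
    (le_ciSup (bddAbove_range_valStratGF u) σA)

lemma valGF_le_of_forall_row_le [Nonempty A] (σB : FDist B) {c : ℝ}
    (h : ∀ a, ∑ b, σB.1 b * u a b ≤ c) : valGF u ≤ c :=
  ciSup_le fun σA => (valStratGF_le_out u σA σB).trans
    (by rw [out_eq_sum_row]; exact σA.sum_mul_le h)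

lemma le_valGF_of_forall_le [Nonempty A] [Nonempty B] {c : ℝ} (h : ∀ a b, c ≤ u a b) :
    c ≤ valGF u :=
  le_valGF_of_forall_le_outB (FDist.uniform A) fun b => FDist.le_sum_mul _ fun a => h a b

lemma valGF_le_of_forall_le [Nonempty A] [Nonempty B] {c : ℝ} (h : ∀ a b, u a b ≤ c) :
    valGF u ≤ c :=
  valGF_le_of_forall_row_le (FDist.uniform B) fun a => FDist.sum_mul_le _ (h a)

lemma le_valGF_of_row [Nonempty B] (a : A) {c : ℝ} (h : ∀ b, c ≤ u a b) : c ≤ valGF u :=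
  le_valGF_of_forall_le_outB (dirac a) fun b => by rw [outB, sum_dirac_mul]; exact h b

lemma valGF_le_of_col [Nonempty A] (b : B) {c : ℝ} (h : ∀ a, u a b ≤ c) : valGF u ≤ c :=
  valGF_le_of_forall_row_le (dirac b) fun a => by rw [sum_dirac_mul]; exact h a

lemma valGF_mono [Nonempty A] [Nonempty B] {u' : A → B → ℝ} (h : ∀ a b, u a b ≤ u' a b) :
    valGF u ≤ valGF u' :=
  ciSup_mono (bddAbove_range_valStratGF u') fun σA =>
    le_ciInf fun σB => (valStratGF_le_out u σA σB).trans (out_mono h σA σB)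

lemma lt_valGF_of_forall_exists_lt [Nonempty A] [Nonempty B] {c : ℝ}
    (hle : ∀ a b, c ≤ u a b) (hlt : ∀ b, ∃ a, c < u a b) : c < valGF u := by
  obtain ⟨b₀, hb₀⟩ := Finite.exists_min (outB u (FDist.uniform A))
  calc c < outB u (FDist.uniform A) b₀ :=
        FDist.lt_sum_mul _ FDist.uniform_pos (fun a => hle a b₀) (hlt b₀)
    _ ≤ valGF u := le_valGF_of_forall_le_outB _ hb₀

lemma valGF_lt_of_forall_exists_lt [Nonempty A] [Nonempty B] {c : ℝ}
    (hle : ∀ a b, u a b ≤ c) (hlt : ∀ a, ∃ b, u a b < c) : valGF u < c := by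
  obtain ⟨a₀, ha₀⟩ := Finite.exists_max fun a => ∑ b, (FDist.uniform B).1 b * u a b
  calc valGF u ≤ ∑ b, (FDist.uniform B).1 b * u a₀ b := valGF_le_of_forall_row_le _ ha₀
    _ < c := FDist.sum_mul_lt _ FDist.uniform_pos (hle a₀) (hlt a₀)

lemma Determined.exists_col_le_of_valGF_le [Nonempty B] {O : Type} {ρ : A → B → O}
    (hρ : Determined ρ) (w : O → ℝ) {c : ℝ} (hc : valGF (fun a b => w (ρ a b)) ≤ c) :
    ∃ b, ∀ a, w (ρ a b) ≤ c := by
  rcases hρ {o | c < w o} with ⟨a, ha⟩ | ⟨b, hb⟩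
  · obtain ⟨b₀, hb₀⟩ := Finite.exists_min fun b => w (ρ a b)
    exact absurd ((ha b₀).trans_le (le_valGF_of_row a hb₀)) hc.not_gt
  · exact ⟨b, fun a => not_lt.1 (hb a)⟩

end Value

section FixedPoint

variable {A B O : Type} [Fintype A] [Fintype B] {ρ : A → B → O} {E : Set O} {α : O → ℝ}

lemma extendVal_mono {y z : ℝ} (hyz : y ≤ z) (o : O) : extendVal E α y o ≤ extendVal E α z o := by
  unfold extendVal
  split_ifs
  exacts [hyz, le_rfl]

lemma extendVal_mem_Icc (hα : ∀ o ∉ E, α o ∈ Set.Icc (0:ℝ) 1) {y : ℝ}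
    (hy : y ∈ Set.Icc (0:ℝ) 1) (o : O) : extendVal E α y o ∈ Set.Icc (0:ℝ) 1 := by
  unfold extendVal
  split_ifs with ho
  exacts [hy, hα o ho]

lemma IsLfpVal.eq {v w : ℝ} (hv : IsLfpVal ρ E α v) (hw : IsLfpVal ρ E α w) : v = w :=
  le_antisymm (hv.2.2 w hw.1 hw.2.1) (hw.2.2 v hv.1 hv.2.1)

variable [Nonempty A] [Nonempty B]

lemma fval_mono {y z : ℝ} (hyz : y ≤ z) : fval ρ E α y ≤ fval ρ E α z :=
  valGF_mono fun _ _ => extendVal_mono hyz _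

lemma fval_mem_Icc (hα : ∀ o ∉ E, α o ∈ Set.Icc (0:ℝ) 1) {y : ℝ}
    (hy : y ∈ Set.Icc (0:ℝ) 1) : fval ρ E α y ∈ Set.Icc (0:ℝ) 1 :=
  ⟨le_valGF_of_forall_le fun _ _ => (extendVal_mem_Icc hα hy _).1,
    valGF_le_of_forall_le fun _ _ => (extendVal_mem_Icc hα hy _).2⟩

lemma Determined.isLfpVal_fval_zero (hρ : Determined ρ) (hα : ∀ o ∉ E, α o ∈ Set.Icc (0:ℝ) 1) :
    IsLfpVal ρ E α (fval ρ E α 0) := by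
  set c := fval ρ E α 0
  have hc : c ∈ Set.Icc (0:ℝ) 1 := fval_mem_Icc hα ⟨le_rfl, zero_le_one⟩
  obtain ⟨b, hb⟩ := hρ.exists_col_le_of_valGF_le (extendVal E α 0) le_rfl
  have hfix : fval ρ E α c ≤ c := valGF_le_of_col b fun a => by
    have := hb a
    unfold extendVal at this ⊢
    split_ifs at this ⊢
    exacts [le_rfl, this]
  exact ⟨hc, le_antisymm hfix (fval_mono hc.1), fun y hy hy' => hy' ▸ fval_mono hy.1⟩

lemma isLfpVal_one_of_forall_exists_mem (hcol : ∀ b, ∃ a, ρ a b ∈ E) :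
    IsLfpVal ρ Eᶜ (fun _ => 1) 1 := by
  have h1 : ∀ o, extendVal Eᶜ (fun _ => 1) 1 o = 1 := fun o => by
    unfold extendVal; split_ifs <;> rfl
  refine ⟨⟨zero_le_one, le_rfl⟩, le_antisymm (valGF_le_of_forall_le fun a b => (h1 _).le)
    (le_valGF_of_forall_le fun a b => (h1 _).ge), fun y hy hfix => ?_⟩
  by_contra! hy1
  refine (lt_valGF_of_forall_exists_lt (c := y) (fun a b => ?_) fun b => ?_).ne' hfix
  · unfold extendVal; split_ifs
    exacts [le_rfl, hy1.le]
  · obtain ⟨a, ha⟩ := hcol b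
    exact ⟨a, by simpa [extendVal, ha] using hy1⟩

lemma fval_zero_lt_one_of_forall_exists_not_mem (hrow : ∀ a, ∃ b, ρ a b ∉ E) :
    fval ρ Eᶜ (fun _ => 1) 0 < 1 := by
  refine valGF_lt_of_forall_exists_lt (fun a b => ?_) fun a => ?_
  · unfold extendVal; split_ifs
    exacts [zero_le_one, le_rfl]
  · obtain ⟨b, hb⟩ := hrow a
    exact ⟨b, by simp [extendVal, hb]⟩

end FixedPoint

end CRG

theorem stmt11_general
    {A B O : Type} [Fintype A] [Fintype B]
    [Nonempty A] [Nonempty B]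
    (ρ : A → B → O) :
    CRG.Determined ρ ↔
      ∀ (E : Set O) (α : O → ℝ), (∀ o ∉ E, α o ∈ Set.Icc (0:ℝ) 1) →
        ∀ v : ℝ, CRG.IsLfpVal ρ E α v → v = CRG.fval ρ E α 0 := by
  refine ⟨fun hρ E α hα v hv => hv.eq (hρ.isLfpVal_fval_zero hα), fun h E => ?_⟩
  by_contra! hE
  obtain ⟨hrow, hcol⟩ := hE
  exact (CRG.fval_zero_lt_one_of_forall_exists_not_mem hrow).ne'
    (h Eᶜ (fun _ => 1) (fun _ _ => ⟨zero_le_one, le_rfl⟩) 1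
      (CRG.isLfpVal_one_of_forall_exists_mem hcol))

/-- a finite game form is determined iff for every partial valuation `α`
of its outcomes, the least fixed point of `f_α` equals `f_α(0)`. -/
theorem stmt11
    {A B O : Type} [Fintype A] [Fintype B] [Fintype O]
    [Nonempty A] [Nonempty B] [Nonempty O]
    (ρ : A → B → O) :
    CRG.Determined ρ ↔
      ∀ (E : Set O) (α : O → ℝ), (∀ o ∉ E, α o ∈ Set.Icc (0:ℝ) 1) →
        ∀ v : ℝ, CRG.IsLfpVal ρ E α v → v = CRG.fval ρ E α 0 :=
  stmt11_general ρ
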